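/- arXiv:0905.0298 — 2 statements merged into one kernel-verified Lean document; each statement's English description precedes it below -/
import Mathlib

section
/- Let m ≥ 3 and let A and B be finite sets of complex numbers, each having no m points on a line. Then the set S of all v ∈ ℂ for which the set A + v·B := {a + v·b : a ∈ A, b ∈ B} either has fewer than |A|·|B| points or has m points on a line, has Lebesgue measure zero in ℂ. -/
open MeasureTheory

noncomputable section

/-- `Q` is a similar copy of `P`: the image of `P` under an
orientation-preserving similarity `p ↦ z·p + w`, `z ≠ 0`. -/
def IsSimilarCopy (P Q : Finset ℂ) : Prop :=
  ∃ z w : ℂ, z ≠ 0 ∧ (Q : Set ℂ) = (fun p => z * p + w) '' (P : Set ℂ)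

/-- `SP P Q` is the number of subsets of `Q` that are similar copies of `P`. -/
def SP (P Q : Finset ℂ) : ℕ :=
  letI := Classical.decPred (IsSimilarCopy P)
  (Q.powerset.filter (IsSimilarCopy P)).card

/-- `Q` has no `m` points on a line: every collinear subset has at most `m - 1` points. -/
def NoMOnLine (m : ℕ) (Q : Finset ℂ) : Prop :=
  ∀ S ⊆ Q, Collinear ℝ (S : Set ℂ) → S.card ≤ m - 1

/-- `Q` has `m` points on a line. -/
def HasMOnLine (m : ℕ) (Q : Finset ℂ) : Prop :=
  ∃ S ⊆ Q, S.card = m ∧ Collinear ℝ (S : Set ℂ)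

/-- The number of orientation-preserving isometries of `ℂ` mapping `P` onto itself,
i.e. maps `p ↦ u·p + w` with `|u| = 1` fixing `P` setwise. -/
def IsoPlusCard (P : Finset ℂ) : ℕ :=
  {uw : ℂ × ℂ | ‖uw.1‖ = 1 ∧
    (fun p => uw.1 * p + uw.2) '' (P : Set ℂ) = (P : Set ℂ)}.ncard

/-- The index of `A` with respect to the pattern `P`. -/
def indexP (P A : Finset ℂ) : ℝ :=
  Real.log ((IsoPlusCard P : ℝ) * SP P A + A.card) / Real.log A.card

/-- `SPnm P n m` : the maximum of `SP P Q` over `n`-point sets `Q`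
with no `m` points on a line. -/
def SPnm (P : Finset ℂ) (n m : ℕ) : ℕ :=
  sSup {k | ∃ Q : Finset ℂ, Q.card = n ∧ NoMOnLine m Q ∧ SP P Q = k}

/-- `SPn P n` : the maximum of `SP P Q` over all `n`-point sets `Q`. -/
def SPn (P : Finset ℂ) (n : ℕ) : ℕ :=
  sSup {k | ∃ Q : Finset ℂ, Q.card = n ∧ SP P Q = k}

/-- The Minkowski sum `B + C` of two finite sets of complex numbers. -/
def minkSum (B C : Finset ℂ) : Finset ℂ :=
  letI := Classical.decEq ℂ
  Finset.image₂ (· + ·) B C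

/-- `Q` contains four pairwise distinct points forming a parallelogram. -/
def HasParallelogram (Q : Finset ℂ) : Prop :=
  ∃ p₁ ∈ Q, ∃ p₂ ∈ Q, ∃ p₃ ∈ Q, ∃ p₄ ∈ Q,
    p₁ ≠ p₂ ∧ p₁ ≠ p₃ ∧ p₁ ≠ p₄ ∧ p₂ ≠ p₃ ∧ p₂ ≠ p₄ ∧ p₃ ≠ p₄ ∧
    p₂ - p₁ = p₄ - p₃

/-- `Q` is parallelogram-free: no 3 collinear points and no parallelogram. -/
def ParallelogramFree (Q : Finset ℂ) : Prop :=
  (∀ S ⊆ Q, Collinear ℝ (S : Set ℂ) → S.card ≤ 2) ∧ ¬ HasParallelogram Q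

/-- The set `Q(P, A, u, v) = ⋃_{p ∈ P} (u·p + (v·p − p + 1)·A)`. -/
def Qset (P A : Finset ℂ) (u v : ℂ) : Finset ℂ :=
  letI := Classical.decEq ℂ
  P.biUnion fun p => A.image fun a => u * p + (v * p - p + 1) * a

/-- The vertex set of the regular `k`-gon. -/
def Rpoly (k : ℕ) : Finset ℂ :=
  letI := Classical.decEq ℂ
  (Finset.range k).image fun j : ℕ => Complex.exp (2 * Real.pi * Complex.I * (j : ℂ) / (k : ℂ))

/-- `ω = e^{2πi/3}`. -/
def omega3 : ℂ := Complex.exp (2 * Real.pi * Complex.I / 3)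

/-- The vertex set `{1, ω, ω²}` of an equilateral triangle. -/
def triEq : Finset ℂ :=
  letI := Classical.decEq ℂ
  {1, omega3, omega3 ^ 2}

/-- The set `A + v·B`. -/
def AvB (A B : Finset ℂ) (v : ℂ) : Finset ℂ :=
  letI := Classical.decEq ℂ
  Finset.image₂ (fun a b => a + v * b) A B

/-!
Write the points of `A + v·B` as `pairEval v (a, b) = a + v * b`. Two distinct pairs collide for
at most one `v`. For three pairs `p, q, r`, collinearity of their images is the equation
`Im ((z_q - z_p) * conj (z_r - z_p)) = 0`, a real quadratic in `(v.re, v.im)`; its zero set is a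
circle, a line, or all of `ℂ`. So, off a null set of `v`, any three pairs whose images are
collinear for `v` have collinear images for every `w`, and this forces the pairs themselves to lie
on a real line in `ℂ × ℂ`. Such a line projects injectively to one of the two factors, so `m`
collinear points of `A + v·B` would give `m` collinear points of `A` or of `B`.
-/

open Complex ComplexConjugate

section Collinear

variable {k V W : Type*} [Field k] [AddCommGroup V] [Module k V] [AddCommGroup W] [Module k W]

theorem Collinear.image_linearMap {s : Set V} (h : Collinear k s) (f : V →ₗ[k] W) :
    Collinear k (f '' s) := by
  obtain ⟨p₀, d, hd⟩ := (collinear_iff_exists_forall_eq_smul_vadd s).1 h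
  refine (collinear_iff_exists_forall_eq_smul_vadd _).2 ⟨f p₀, f d, ?_⟩
  rintro _ ⟨p, hp, rfl⟩
  obtain ⟨r, rfl⟩ := hd p hp
  exact ⟨r, by simp⟩

theorem Set.InjOn.of_forall_eq_smul_vadd {s : Set V} {p₀ d : V}
    (hd : ∀ p ∈ s, ∃ r : k, p = r • d +ᵥ p₀) (f : V →ₗ[k] W) (hf : f d ≠ 0) : s.InjOn f := by
  intro p hp q hq hpq
  obtain ⟨r, rfl⟩ := hd p hp
  obtain ⟨r', rfl⟩ := hd q hq
  have : r = r' := smul_left_injective k hf (by simpa using hpq)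
  rw [this]

theorem Collinear.injOn_fst_or_injOn_snd {s : Set (V × W)} (h : Collinear k s) :
    s.InjOn Prod.fst ∨ s.InjOn Prod.snd := by
  obtain ⟨p₀, d, hd⟩ := (collinear_iff_exists_forall_eq_smul_vadd s).1 h
  by_cases h₁ : d.1 = 0
  · by_cases h₂ : d.2 = 0
    · have hs : s.Subsingleton := by
        have : d = 0 := Prod.ext h₁ h₂
        intro p hp q hq
        obtain ⟨r, rfl⟩ := hd p hp
        obtain ⟨r', rfl⟩ := hd q hq
        simp [this]
      exact Or.inl (hs.injOn _)
    · exact Or.inr (Set.InjOn.of_forall_eq_smul_vadd hd (LinearMap.snd k V W) h₂)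
  · exact Or.inl (Set.InjOn.of_forall_eq_smul_vadd hd (LinearMap.fst k V W) h₁)

end Collinear

theorem Complex.exists_ofReal_mul_eq_of_im_mul_conj_eq_zero {z w : ℂ} (hw : w ≠ 0)
    (h : (z * conj w).im = 0) : ∃ r : ℝ, z = r * w := by
  refine ⟨(z * conj w).re / normSq w, ?_⟩
  have hreal : ((z * conj w).re : ℂ) = z * conj w := Complex.ext (by simp) (by simp [h])
  rw [ofReal_div, hreal, normSq_eq_conj_mul_self]
  field_simp
  rw [mul_div_cancel_right₀ z ((map_ne_zero conj).2 hw)]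

theorem Complex.im_sub_mul_conj_sub_eq_zero_of_collinear {z₁ z₂ z₃ : ℂ}
    (h : Collinear ℝ ({z₁, z₂, z₃} : Set ℂ)) : ((z₂ - z₁) * conj (z₃ - z₁)).im = 0 := by
  obtain ⟨d, hd⟩ := (collinear_iff_of_mem (Set.mem_insert z₁ _)).1 h
  obtain ⟨r₂, h₂⟩ := hd z₂ (by simp)
  obtain ⟨r₃, h₃⟩ := hd z₃ (by simp)
  rw [h₂, h₃, vadd_eq_add, vadd_eq_add, add_sub_cancel_right, add_sub_cancel_right, real_smul,
    real_smul]
  simp [mul_im, mul_re]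
  ring

theorem Complex.im_add_mul_mul_conj_add_mul (α β γ δ v : ℂ) :
    ((α + v * β) * conj (γ + v * δ)).im =
      (β * conj δ).im * (v.re ^ 2 + v.im ^ 2) + ((α * conj δ).im + (β * conj γ).im) * v.re
        + ((β * conj γ).re - (α * conj δ).re) * v.im + (α * conj γ).im := by
  simp only [add_im, add_re, mul_im, mul_re, conj_re, conj_im]
  ring

theorem Complex.coeffs_of_forall_im_add_mul_mul_conj_add_mul_eq_zero {α β γ δ : ℂ}
    (h : ∀ w : ℂ, ((α + w * β) * conj (γ + w * δ)).im = 0) :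
    (β * conj δ).im = 0 ∧ (α * conj γ).im = 0 ∧ α * conj δ = conj β * γ := by
  have e := fun w => (im_add_mul_mul_conj_add_mul α β γ δ w).symm.trans (h w)
  have e₀ := e 0
  have e₁ := e 1
  have e₂ := e (-1)
  have e₃ := e I
  simp only [zero_re, zero_im, one_re, one_im, neg_re, neg_im, I_re, I_im] at e₀ e₁ e₂ e₃
  refine ⟨by linarith, by linarith, Complex.ext ?_ ?_⟩
  · have : (β * conj γ).re - (α * conj δ).re = 0 := by linarith
    simp only [mul_re, conj_re, conj_im] at this ⊢
    linarith
  · have : (α * conj δ).im + (β * conj γ).im = 0 := by linarith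
    simp only [mul_im, conj_re, conj_im] at this ⊢
    linarith

theorem Complex.exists_ofReal_mul_of_forall_im_add_mul_mul_conj_add_mul_eq_zero {α β γ δ : ℂ}
    (h : ∀ w : ℂ, ((α + w * β) * conj (γ + w * δ)).im = 0) (hγδ : γ ≠ 0 ∨ δ ≠ 0) :
    ∃ r : ℝ, α = r * γ ∧ β = r * δ := by
  obtain ⟨hβδ, hαγ, hcross⟩ := coeffs_of_forall_im_add_mul_mul_conj_add_mul_eq_zero h
  by_cases hδ : δ = 0
  · have hγ : γ ≠ 0 := hγδ.resolve_right (not_not.2 hδ)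
    obtain ⟨r, hr⟩ := exists_ofReal_mul_eq_of_im_mul_conj_eq_zero hγ hαγ
    have hβ : β = 0 := by simpa [hδ, hγ] using hcross.symm
    exact ⟨r, hr, by simp [hβ, hδ]⟩
  · obtain ⟨r, hr⟩ := exists_ofReal_mul_eq_of_im_mul_conj_eq_zero hδ hβδ
    refine ⟨r, mul_right_cancel₀ ((map_ne_zero conj).2 hδ) ?_, hr⟩
    rw [hcross, hr, map_mul, conj_ofReal]
    ring

theorem MeasureTheory.Measure.addHaar_setOf_linearMap_eq {E : Type*} [NormedAddCommGroup E]
    [NormedSpace ℝ E] [MeasurableSpace E] [BorelSpace E] [FiniteDimensional ℝ E] (μ : Measure E)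
    [μ.IsAddHaarMeasure] {f : E →ₗ[ℝ] ℝ} (hf : f ≠ 0) (t : ℝ) : μ {x | f x = t} = 0 := by
  rcases Set.eq_empty_or_nonempty {x | f x = t} with he | ⟨x₀, hx₀⟩
  · rw [he, measure_empty]
  have : {x | f x = t} = (· + -x₀) ⁻¹' (LinearMap.ker f : Set E) := by
    ext x
    simp [sub_eq_zero, hx₀.out, ← sub_eq_add_neg]
  rw [this, measure_preimage_add_right]
  exact addHaar_submodule μ _ (by rwa [Ne, LinearMap.ker_eq_top])

theorem Complex.volume_setOf_quadratic_eq_zero {K L M N : ℝ}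
    (h : K ≠ 0 ∨ L ≠ 0 ∨ M ≠ 0 ∨ N ≠ 0) :
    volume {v : ℂ | K * (v.re ^ 2 + v.im ^ 2) + L * v.re + M * v.im + N = 0} = 0 := by
  by_cases hK : K = 0
  · set f : ℂ →ₗ[ℝ] ℝ := L • reLm + M • imLm
    have hfv : ∀ v, f v = L * v.re + M * v.im := fun v => by simp [f]
    by_cases hf : f = 0
    · have hL : L = 0 := by simpa [hfv] using LinearMap.congr_fun hf 1
      have hM : M = 0 := by simpa [hfv] using LinearMap.congr_fun hf I
      have hN : N ≠ 0 := by tauto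
      simp [hK, hL, hM, hN]
    · refine measure_mono_null (fun v hv => ?_) (volume.addHaar_setOf_linearMap_eq hf (-N))
      simp only [Set.mem_ofPred_eq, hK, zero_mul, zero_add] at hv ⊢
      linarith [hfv v]
  · set c : ℂ := ⟨L / (2 * K), M / (2 * K)⟩
    refine measure_mono_null (fun v hv => ?_)
      (Measure.addHaar_sphere volume (-c) √(normSq c - N / K))
    have hsq : normSq (v + c) = normSq c - N / K := by
      simp only [normSq_apply, add_re, add_im, c]
      field_simp
      linear_combination (4 * K) * hv.out
    rw [mem_sphere_iff_norm, sub_neg_eq_add, norm_def, hsq]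

def pairEval (v : ℂ) (p : ℂ × ℂ) : ℂ := p.1 + v * p.2

theorem coe_AvB (A B : Finset ℂ) (v : ℂ) :
    (AvB A B v : Set ℂ) = pairEval v '' (A ×ˢ B : Finset (ℂ × ℂ)) := by
  rw [AvB, Finset.coe_image₂, Finset.coe_product, ← Set.image_uncurry_prod]
  rfl

theorem subsingleton_setOf_pairEval_eq {p q : ℂ × ℂ} (hpq : p ≠ q) :
    {v | pairEval v p = pairEval v q}.Subsingleton := by
  intro v hv w hw
  simp only [Set.mem_ofPred_eq, pairEval] at hv hw
  have h₂ : p.2 - q.2 ≠ 0 := by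
    refine sub_ne_zero.2 fun h => hpq (Prod.ext ?_ h)
    simpa [h] using hv
  refine mul_right_cancel₀ h₂ ?_
  linear_combination hv - hw

/-- Twice the signed area of the triangle with vertices `pairEval v p`, `pairEval v q`,
`pairEval v r`. -/
def collinearDefect (p q r : ℂ × ℂ) (v : ℂ) : ℝ :=
  ((pairEval v q - pairEval v p) * conj (pairEval v r - pairEval v p)).im

theorem collinearDefect_eq (p q r : ℂ × ℂ) (v : ℂ) :
    collinearDefect p q r v =
      ((q.1 - p.1 + v * (q.2 - p.2)) * conj (r.1 - p.1 + v * (r.2 - p.2))).im := by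
  simp only [collinearDefect, pairEval]
  ring_nf

theorem volume_setOf_collinearDefect_eq_zero {p q r : ℂ × ℂ}
    (h : ∃ w, collinearDefect p q r w ≠ 0) : volume {v | collinearDefect p q r v = 0} = 0 := by
  simp only [collinearDefect_eq, im_add_mul_mul_conj_add_mul] at h ⊢
  apply volume_setOf_quadratic_eq_zero
  obtain ⟨w, hw⟩ := h
  contrapose! hw
  obtain ⟨hK, hL, hM, hN⟩ := hw
  rw [hK, hL, hM, hN]
  ring

theorem exists_smul_of_forall_collinearDefect_eq_zero {p q r : ℂ × ℂ}
    (h : ∀ w, collinearDefect p q r w = 0) (hrp : r ≠ p) : ∃ t : ℝ, q - p = t • (r - p) := by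
  have hr : r.1 - p.1 ≠ 0 ∨ r.2 - p.2 ≠ 0 := by
    by_contra! h
    exact hrp (Prod.ext (sub_eq_zero.1 h.1) (sub_eq_zero.1 h.2))
  obtain ⟨t, h₁, h₂⟩ := exists_ofReal_mul_of_forall_im_add_mul_mul_conj_add_mul_eq_zero
    (fun w => (collinearDefect_eq p q r w).symm.trans (h w)) hr
  exact ⟨t, Prod.ext (by simpa [real_smul] using h₁) (by simpa [real_smul] using h₂)⟩

theorem collinear_of_forall_collinearDefect_eq_zero {s : Set (ℂ × ℂ)} {p : ℂ × ℂ} (hp : p ∈ s)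
    (h : ∀ q ∈ s, ∀ r ∈ s, ∀ w, collinearDefect p q r w = 0) : Collinear ℝ s := by
  by_cases hs : ∃ r ∈ s, r ≠ p
  · obtain ⟨r, hr, hrp⟩ := hs
    refine (collinear_iff_of_mem hp).2 ⟨r - p, fun q hq => ?_⟩
    obtain ⟨t, ht⟩ := exists_smul_of_forall_collinearDefect_eq_zero (h q hq r hr) hrp
    exact ⟨t, by rw [vadd_eq_add, ← ht, sub_add_cancel]⟩
  · push Not at hs
    exact (collinear_singleton ℝ p).subset hs

theorem NoMOnLine.card_le_of_injOn {V : Type*} [AddCommGroup V] [Module ℝ V] {m : ℕ}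
    {Q : Finset ℂ} (hQ : NoMOnLine m Q) {S : Finset V} (hS : Collinear ℝ (S : Set V))
    (π : V →ₗ[ℝ] ℂ) (hπ : ∀ p ∈ S, π p ∈ Q) (hinj : Set.InjOn π S) : S.card ≤ m - 1 := by
  classical
  have := hQ (S.image π) (Finset.image_subset_iff.2 hπ)
    (by simpa only [Finset.coe_image] using hS.image_linearMap π)
  rwa [Finset.card_image_of_injOn hinj] at this

def collisionSet (A B : Finset ℂ) : Set ℂ :=
  ⋃ pq ∈ (A ×ˢ B).offDiag, {v | pairEval v pq.1 = pairEval v pq.2}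

def degenerateSet (A B : Finset ℂ) : Set ℂ :=
  ⋃ p ∈ A ×ˢ B, ⋃ q ∈ A ×ˢ B, ⋃ r ∈ A ×ˢ B,
    {v | collinearDefect p q r v = 0 ∧ ∃ w, collinearDefect p q r w ≠ 0}

theorem MeasureTheory.measure_biUnion_finset_null {ι α : Type*} [MeasurableSpace α]
    {μ : Measure α} {s : Finset ι} {t : ι → Set α} (h : ∀ i ∈ s, μ (t i) = 0) :
    μ (⋃ i ∈ s, t i) = 0 :=
  (measure_biUnion_null_iff s.countable_toSet).2 h

theorem volume_collisionSet (A B : Finset ℂ) : volume (collisionSet A B) = 0 :=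
  measure_biUnion_finset_null fun _ hpq =>
    (subsingleton_setOf_pairEval_eq (Finset.mem_offDiag.1 hpq).2.2).measure_zero _

theorem volume_degenerateSet (A B : Finset ℂ) : volume (degenerateSet A B) = 0 := by
  refine measure_biUnion_finset_null fun p _ => measure_biUnion_finset_null fun q _ =>
    measure_biUnion_finset_null fun r _ => ?_
  by_cases h : ∃ w, collinearDefect p q r w ≠ 0
  · exact measure_mono_null (fun v hv => hv.1) (volume_setOf_collinearDefect_eq_zero h)
  · simp [h]

theorem card_AvB_of_notMem_collisionSet {A B : Finset ℂ} {v : ℂ} (hv : v ∉ collisionSet A B) :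
    (AvB A B v).card = A.card * B.card := by
  refine Finset.card_image₂_iff.2 fun p hp q hq hpq => ?_
  by_contra hne
  simp only [collisionSet, Set.mem_iUnion, not_exists] at hv
  exact hv (p, q)
    (Finset.mem_offDiag.2 ⟨Finset.mem_product.2 hp, Finset.mem_product.2 hq, hne⟩) hpq

theorem not_hasMOnLine_AvB {m : ℕ} (hm : 1 ≤ m) {A B : Finset ℂ} (hA : NoMOnLine m A)
    (hB : NoMOnLine m B) {v : ℂ} (hv : v ∉ degenerateSet A B) : ¬HasMOnLine m (AvB A B v) := by
  classical
  rintro ⟨S, hSsub, hScard, hScol⟩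
  obtain ⟨S', hS'sub, rfl⟩ : ∃ S' ⊆ A ×ˢ B, S'.image (pairEval v) = S := by
    refine Finset.subset_image_iff.1 ?_
    rwa [← Finset.coe_subset, Finset.coe_image, ← coe_AvB]
  have hcard : m ≤ S'.card := hScard ▸ Finset.card_image_le
  obtain ⟨p, hp⟩ : S'.Nonempty := Finset.card_pos.1 (by omega)
  have hcol : Collinear ℝ (S' : Set (ℂ × ℂ)) := by
    refine collinear_of_forall_collinearDefect_eq_zero hp fun q hq r hr => ?_
    have hpqr : collinearDefect p q r v = 0 := by
      refine im_sub_mul_conj_sub_eq_zero_of_collinear (hScol.subset ?_)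
      simp only [Set.insert_subset_iff, Set.singleton_subset_iff, Finset.coe_image]
      exact ⟨Set.mem_image_of_mem _ hp, Set.mem_image_of_mem _ hq, Set.mem_image_of_mem _ hr⟩
    by_contra! hw
    simp only [degenerateSet, Set.mem_iUnion] at hv
    exact hv ⟨p, hS'sub hp, q, hS'sub hq, r, hS'sub hr, hpqr, hw⟩
  rcases hcol.injOn_fst_or_injOn_snd with hinj | hinj
  · have := hA.card_le_of_injOn hcol (LinearMap.fst ℝ ℂ ℂ)
      (fun p hp => (Finset.mem_product.1 (hS'sub hp)).1) hinj
    omega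
  · have := hB.card_le_of_injOn hcol (LinearMap.snd ℝ ℂ ℂ)
      (fun p hp => (Finset.mem_product.1 (hS'sub hp)).2) hinj
    omega

/-- If `A` and `B` have no `m` points on a line, then the set of `v ∈ ℂ` for which
`A + v·B` has fewer than `|A|·|B|` points or has `m` points on a line has Lebesgue
measure zero. -/
theorem stmt2 (m : ℕ) (hm : 3 ≤ m) (A B : Finset ℂ)
    (hA : NoMOnLine m A) (hB : NoMOnLine m B) :
    volume {v : ℂ | (AvB A B v).card < A.card * B.card ∨ HasMOnLine m (AvB A B v)} = 0 := by
  refine measure_mono_null (fun v hv => ?_)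
    (measure_union_null (volume_collisionSet A B) (volume_degenerateSet A B))
  by_contra hbad
  rw [Set.mem_union, not_or] at hbad
  rcases hv with hcard | hline
  · exact hcard.ne (card_AvB_of_notMem_collisionSet hbad.1)
  · exact not_hasMOnLine_AvB (by omega) hA hB hbad.2 hline
end
end

section
/- Let △ = {1, ω, ω²} ⊆ ℂ, where ω = e^{2πi/3}, be the vertex set of an equilateral triangle. Then there exist a constant c > 0 and a threshold N such that for all n ≥ N, S_△(n, 3) ≥ c·n^{log 102 / log 15}. -/
/-!
Count the ordered triples `(x, y, z)` of points of `Q` with `x + ωy + ω²z = 0`: they are the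
vertices of positively oriented equilateral triangles, plus the `|Q|` degenerate triples
`(x, x, x)`, so there are at most `9 · S_△(Q) + |Q|` of them. Because the equation is linear,
the count is supermultiplicative under `Q ↦ B + εQ` as soon as `(b, x) ↦ b + εx` is injective
on `B × Q`. For `ε = δu`, with `u` chosen so that no `u (x' - x)` is parallel to a `b' - b`,
three points of `B + δuQ` are collinear only for finitely many `δ`, so a generic `ε` keeps the
set free of three collinear points. Iterating from a 15-point subset of the Eisenstein lattice
with 102 such triples gives `15^k` points with at least `102^k` triples; adding generic points
fills the gaps between powers of 15.
-/

open MeasureTheory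

noncomputable section

open Finset

lemma omega3_isPrimitiveRoot : IsPrimitiveRoot omega3 3 := by
  simpa [omega3] using Complex.isPrimitiveRoot_exp 3 (by norm_num)

lemma omega3_sq_add_omega3_add_one : omega3 ^ 2 + omega3 + 1 = 0 := by
  have h := omega3_isPrimitiveRoot.geom_sum_eq_zero (by norm_num)
  simp only [sum_range_succ, sum_range_zero, pow_zero, pow_one] at h
  linear_combination h

lemma omega3_im_pos : 0 < omega3.im := by
  have h : omega3 = Complex.exp ((2 * Real.pi / 3 : ℝ) * Complex.I) := by
    unfold omega3; push_cast; ring_nf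
  rw [h, Complex.exp_ofReal_mul_I_im]
  exact Real.sin_pos_of_pos_of_lt_pi (by positivity) (by linarith [Real.pi_pos])

def cross (z w : ℂ) : ℝ := z.re * w.im - z.im * w.re

@[simp] lemma cross_zero_left (w : ℂ) : cross 0 w = 0 := by simp [cross]

@[simp] lemma cross_zero_right (z : ℂ) : cross z 0 = 0 := by simp [cross]

lemma cross_comm (z w : ℂ) : cross z w = -cross w z := by simp only [cross]; ring

lemma cross_mul_mul (u z w : ℂ) : cross (u * z) (u * w) = Complex.normSq u * cross z w := by
  simp only [cross, Complex.mul_re, Complex.mul_im, Complex.normSq_apply]; ring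

lemma cross_add_ofReal_mul (z w z' w' : ℂ) (t : ℝ) :
    cross (z + t * z') (w + t * w') =
      cross z w + (cross z w' + cross z' w) * t + cross z' w' * t ^ 2 := by
  simp only [cross, Complex.add_re, Complex.add_im, Complex.mul_re, Complex.mul_im,
    Complex.ofReal_re, Complex.ofReal_im]
  ring

/-- Lagrange's identity: `cross z w` and `cross z (I * w)` are the imaginary and real parts
of `conj z * w`. -/
lemma cross_sq_add_cross_I_mul_sq (z w : ℂ) :
    cross z w ^ 2 + cross z (Complex.I * w) ^ 2 = Complex.normSq z * Complex.normSq w := by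
  simp only [cross, Complex.mul_re, Complex.mul_im, Complex.I_re, Complex.I_im,
    Complex.normSq_apply]
  ring

lemma collinear_iff_cross_eq_zero {p q r : ℂ} :
    Collinear ℝ ({p, q, r} : Set ℂ) ↔ cross (q - p) (r - p) = 0 := by
  constructor
  · rw [collinear_iff_of_mem (Set.mem_insert p _)]
    rintro ⟨v, hv⟩
    obtain ⟨s, hs⟩ := hv q (by simp)
    obtain ⟨t, ht⟩ := hv r (by simp)
    rw [hs, ht]
    simp only [vadd_eq_add, add_sub_cancel_right, cross, Complex.real_smul, Complex.mul_re,
      Complex.mul_im, Complex.ofReal_re, Complex.ofReal_im]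
    ring
  · intro h
    rcases eq_or_ne p q with rfl | hpq
    · simpa using collinear_pair ℝ p r
    have hqp : q - p ≠ 0 := sub_ne_zero.mpr hpq.symm
    have hratio : (r - p) / (q - p) = (((r - p) / (q - p)).re : ℂ) := by
      refine Complex.ext rfl ?_
      rw [Complex.ofReal_im, Complex.div_im, div_sub_div_same, div_eq_zero_iff]
      left
      simp only [cross] at h
      linarith
    rw [collinear_iff_of_mem (Set.mem_insert p _)]
    refine ⟨q - p, fun x hx => ?_⟩
    rcases hx with rfl | rfl | rfl
    · exact ⟨0, by simp⟩
    · exact ⟨1, by simp⟩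
    · refine ⟨((x - p) / (q - p)).re, ?_⟩
      rw [Complex.real_smul, ← hratio, vadd_eq_add, div_mul_cancel₀ _ hqp, sub_add_cancel]

lemma noMOnLine_three_iff {Q : Finset ℂ} : NoMOnLine 3 Q ↔
    ∀ p ∈ Q, ∀ q ∈ Q, ∀ r ∈ Q, p ≠ q → p ≠ r → q ≠ r → cross (q - p) (r - p) ≠ 0 := by
  constructor
  · intro h p hp q hq r hr hpq hpr hqr hpqr
    have hsub : {p, q, r} ⊆ Q := by
      intro x hx
      simp only [mem_insert, mem_singleton] at hx
      rcases hx with rfl | rfl | rfl <;> assumption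
    have := h {p, q, r} hsub (by simpa [collinear_iff_cross_eq_zero] using hpqr)
    rw [card_eq_three.mpr ⟨p, q, r, hpq, hpr, hqr, rfl⟩] at this
    omega
  · intro h S hS hcol
    by_contra! hS3
    obtain ⟨p, hp, q, hq, r, hr, hpq, hpr, hqr⟩ := two_lt_card.mp (by omega : 2 < S.card)
    refine h p (hS hp) q (hS hq) r (hS hr) hpq hpr hqr (collinear_iff_cross_eq_zero.mp ?_)
    refine hcol.subset ?_
    intro x hx
    rcases hx with rfl | rfl | rfl <;> assumption

open Polynomial in
lemma finite_setOf_quadratic_eq_zero {a b c : ℝ} (h : a ≠ 0 ∨ b ≠ 0 ∨ c ≠ 0) :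
    {x : ℝ | a + b * x + c * x ^ 2 = 0}.Finite := by
  have hp : C a + C b * X + C c * X ^ 2 ≠ 0 := by
    intro h0
    have h₀ := congrArg (coeff · 0) h0
    have h₁ := congrArg (coeff · 1) h0
    have h₂ := congrArg (coeff · 2) h0
    simp [coeff_X, coeff_X_pow] at h₀ h₁ h₂
    tauto
  refine (finite_setOfPred_isRoot hp).subset fun x hx => ?_
  simpa using hx

lemma exists_forall_not_of_finite {ι : Type*} (s : Finset ι) {P : ι → ℝ → Prop}
    (h : ∀ i ∈ s, {x | P i x}.Finite) : ∃ x : ℝ, ∀ i ∈ s, ¬P i x := by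
  obtain ⟨x, hx⟩ := (s.finite_toSet.biUnion h).exists_notMem
  exact ⟨x, fun i hi hPi => hx (Set.mem_biUnion hi hPi)⟩

lemma exists_forall_cross_mul_ne_zero (D E : Finset ℂ) :
    ∃ u : ℂ, u ≠ 0 ∧ ∀ d ∈ D, ∀ e ∈ E, d ≠ 0 → e ≠ 0 → cross d (u * e) ≠ 0 := by
  obtain ⟨t, ht⟩ := exists_forall_not_of_finite ((D.erase 0) ×ˢ (E.erase 0))
    (P := fun de t => cross de.1 ((1 + t * Complex.I) * de.2) = 0) <| by
      rintro ⟨d, e⟩ hde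
      simp only [mem_product, mem_erase] at hde
      have hne : cross d e ≠ 0 ∨ cross d (Complex.I * e) ≠ 0 := by
        by_contra! h0
        have := cross_sq_add_cross_I_mul_sq d e
        rw [h0.1, h0.2] at this
        rcases mul_eq_zero.mp (by linarith : Complex.normSq d * Complex.normSq e = 0) with h | h
        · exact hde.1.1 (Complex.normSq_eq_zero.mp h)
        · exact hde.2.1 (Complex.normSq_eq_zero.mp h)
      refine (finite_setOf_quadratic_eq_zero (c := 0) (Or.imp_right Or.inl hne)).subset
        fun t ht => ?_
      have hlin : cross d ((1 + t * Complex.I) * e) = cross d e + cross d (Complex.I * e) * t := by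
        simp only [cross, Complex.mul_re, Complex.mul_im, Complex.add_re, Complex.add_im,
          Complex.ofReal_re, Complex.ofReal_im, Complex.I_re, Complex.I_im, Complex.one_re,
          Complex.one_im]
        ring
      change cross d ((1 + t * Complex.I) * e) = 0 at ht
      change cross d e + cross d (Complex.I * e) * t + 0 * t ^ 2 = 0
      linarith
  refine ⟨1 + t * Complex.I, fun h => by simpa using congrArg Complex.re h,
    fun d hd e he hd0 he0 => ht (d, e) ?_⟩
  simp [hd, he, hd0, he0]

/-- For `Pᵢ = bᵢ + δ u xᵢ`, `cross (P₂ - P₁) (P₃ - P₁)` is the quadratic in `δ` with these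
coefficients (`cross_add_ofReal_mul`). -/
lemma cross_coeffs_ne_zero {B Q : Finset ℂ} (hB : NoMOnLine 3 B) (hQ : NoMOnLine 3 Q) {u : ℂ}
    (hu₀ : u ≠ 0) (hu : ∀ b ∈ B, ∀ b' ∈ B, ∀ x ∈ Q, ∀ x' ∈ Q, b ≠ b' → x ≠ x' →
      cross (b' - b) (u * (x' - x)) ≠ 0)
    {c₁ c₂ c₃ : ℂ × ℂ} (h₁ : c₁ ∈ B ×ˢ Q) (h₂ : c₂ ∈ B ×ˢ Q) (h₃ : c₃ ∈ B ×ˢ Q)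
    (h₁₂ : c₁ ≠ c₂) (h₁₃ : c₁ ≠ c₃) (h₂₃ : c₂ ≠ c₃) :
    cross (c₂.1 - c₁.1) (c₃.1 - c₁.1) ≠ 0 ∨
      cross (c₂.1 - c₁.1) (u * (c₃.2 - c₁.2)) + cross (u * (c₂.2 - c₁.2)) (c₃.1 - c₁.1) ≠ 0 ∨
      cross (u * (c₂.2 - c₁.2)) (u * (c₃.2 - c₁.2)) ≠ 0 := by
  obtain ⟨b₁, x₁⟩ := c₁
  obtain ⟨b₂, x₂⟩ := c₂
  obtain ⟨b₃, x₃⟩ := c₃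
  simp only [mem_product] at h₁ h₂ h₃
  simp only [ne_eq, Prod.mk.injEq, not_and] at h₁₂ h₁₃ h₂₃
  have hB' := noMOnLine_three_iff.mp hB
  have hQ' := noMOnLine_three_iff.mp hQ
  rcases eq_or_ne b₁ b₂ with rfl | hb₁₂ <;> rcases eq_or_ne b₁ b₃ with rfl | hb₁₃
  · refine Or.inr (Or.inr ?_)
    rw [cross_mul_mul]
    exact mul_ne_zero (Complex.normSq_pos.mpr hu₀).ne'
      (hQ' x₁ h₁.2 x₂ h₂.2 x₃ h₃.2 (h₁₂ rfl) (h₁₃ rfl) (h₂₃ rfl))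
  · refine Or.inr (Or.inl ?_)
    rw [sub_self, cross_zero_left, zero_add, cross_comm, neg_ne_zero]
    exact hu b₁ h₁.1 b₃ h₃.1 x₁ h₁.2 x₂ h₂.2 hb₁₃ (h₁₂ rfl)
  · refine Or.inr (Or.inl ?_)
    rw [sub_self, cross_zero_right, add_zero]
    exact hu b₁ h₁.1 b₂ h₂.1 x₁ h₁.2 x₃ h₃.2 hb₁₂ (h₁₃ rfl)
  rcases eq_or_ne b₂ b₃ with rfl | hb₂₃
  · refine Or.inr (Or.inl ?_)
    have : cross (b₂ - b₁) (u * (x₃ - x₁)) + cross (u * (x₂ - x₁)) (b₂ - b₁) =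
        cross (b₂ - b₁) (u * (x₃ - x₂)) := by
      simp only [cross, Complex.mul_re, Complex.mul_im, Complex.sub_re, Complex.sub_im]; ring
    rw [this]
    exact hu b₁ h₁.1 b₂ h₂.1 x₂ h₂.2 x₃ h₃.2 hb₁₂ (h₂₃ rfl)
  · exact Or.inl (hB' b₁ h₁.1 b₂ h₂.1 b₃ h₃.1 hb₁₂ hb₁₃ hb₂₃)

open scoped Pointwise in
lemma exists_forall_cross_add_mul_ne_zero {B Q : Finset ℂ} (hB : NoMOnLine 3 B)
    (hQ : NoMOnLine 3 Q) :
    ∃ ε : ℂ, ∀ c₁ ∈ B ×ˢ Q, ∀ c₂ ∈ B ×ˢ Q, ∀ c₃ ∈ B ×ˢ Q, c₁ ≠ c₂ → c₁ ≠ c₃ → c₂ ≠ c₃ →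
      cross (c₂.1 + ε * c₂.2 - (c₁.1 + ε * c₁.2)) (c₃.1 + ε * c₃.2 - (c₁.1 + ε * c₁.2)) ≠ 0 := by
  classical
  obtain ⟨u, hu₀, hu⟩ := exists_forall_cross_mul_ne_zero (B - B) (Q - Q)
  have hu' : ∀ b ∈ B, ∀ b' ∈ B, ∀ x ∈ Q, ∀ x' ∈ Q, b ≠ b' → x ≠ x' →
      cross (b' - b) (u * (x' - x)) ≠ 0 := fun b hb b' hb' x hx x' hx' hbb hxx =>
    hu _ (sub_mem_sub hb' hb) _ (sub_mem_sub hx' hx) (sub_ne_zero.mpr hbb.symm)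
      (sub_ne_zero.mpr hxx.symm)
  have hexpand (δ : ℝ) (c₁ c₂ : ℂ × ℂ) : c₂.1 + δ * u * c₂.2 - (c₁.1 + δ * u * c₁.2) =
      c₂.1 - c₁.1 + δ * (u * (c₂.2 - c₁.2)) := by ring
  set T := B ×ˢ Q
  obtain ⟨δ, hδ⟩ := exists_forall_not_of_finite
    ((T ×ˢ T ×ˢ T).filter fun c => c.1 ≠ c.2.1 ∧ c.1 ≠ c.2.2 ∧ c.2.1 ≠ c.2.2)
    (P := fun c δ => cross (c.2.1.1 + δ * u * c.2.1.2 - (c.1.1 + δ * u * c.1.2))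
      (c.2.2.1 + δ * u * c.2.2.2 - (c.1.1 + δ * u * c.1.2)) = 0) <| by
    rintro ⟨c₁, c₂, c₃⟩ hc
    simp only [mem_filter, mem_product] at hc
    refine (finite_setOf_quadratic_eq_zero (cross_coeffs_ne_zero hB hQ hu₀ hu'
      hc.1.1 hc.1.2.1 hc.1.2.2 hc.2.1 hc.2.2.1 hc.2.2.2)).subset fun δ hδ => ?_
    change cross _ _ = 0 at hδ
    rwa [hexpand, hexpand, cross_add_ofReal_mul] at hδ
  exact ⟨δ * u, fun c₁ h₁ c₂ h₂ c₃ h₃ h₁₂ h₁₃ h₂₃ =>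
    hδ (c₁, c₂, c₃) (by simp [T, h₁, h₂, h₃, h₁₂, h₁₃, h₂₃])⟩

lemma exists_injOn_noMOnLine_image {B Q : Finset ℂ} (hB : NoMOnLine 3 B) (hQ : NoMOnLine 3 Q)
    (hB₃ : 2 < B.card) :
    ∃ ε : ℂ, Set.InjOn (fun c : ℂ × ℂ => c.1 + ε * c.2) ↑(B ×ˢ Q) ∧
      NoMOnLine 3 ((B ×ˢ Q).image fun c => c.1 + ε * c.2) := by
  classical
  obtain ⟨ε, hε⟩ := exists_forall_cross_add_mul_ne_zero hB hQ
  refine ⟨ε, fun c₁ h₁ c₂ h₂ h => ?_, noMOnLine_three_iff.mpr ?_⟩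
  · -- a third point of `B ×ˢ Q` would be collinear with the two coinciding images
    by_contra h₁₂
    obtain ⟨b, hb, hb'⟩ := exists_mem_notMem_of_card_lt_card
      ((card_le_two (a := c₁.1) (b := c₂.1)).trans_lt hB₃)
    simp only [mem_insert, mem_singleton, not_or] at hb'
    have h₃ : (b, c₁.2) ∈ B ×ˢ Q := mem_product.mpr ⟨hb, (mem_product.mp h₁).2⟩
    refine hε c₁ h₁ c₂ h₂ _ h₃ h₁₂ (fun h => hb'.1 (congrArg Prod.fst h).symm)
      (fun h => hb'.2 (congrArg Prod.fst h).symm) ?_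
    rw [show c₂.1 + ε * c₂.2 = c₁.1 + ε * c₁.2 from h.symm, sub_self, cross_zero_left]
  · simp only [mem_image]
    rintro _ ⟨c₁, h₁, rfl⟩ _ ⟨c₂, h₂, rfl⟩ _ ⟨c₃, h₃, rfl⟩ h₁₂ h₁₃ h₂₃
    have hf {c c' : ℂ × ℂ} := ne_of_apply_ne (x := c) (y := c') fun c => c.1 + ε * c.2
    exact hε c₁ h₁ c₂ h₂ c₃ h₃ (hf h₁₂) (hf h₁₃) (hf h₂₃)

lemma exists_insert_noMOnLine {Q : Finset ℂ} (hQ : NoMOnLine 3 Q) :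
    ∃ w ∉ Q, NoMOnLine 3 (insert w Q) := by
  classical
  -- a line meets the parabola `s ↦ s + s² i` in at most two points
  obtain ⟨s, hs⟩ := exists_forall_not_of_finite (Q ×ˢ Q)
    (P := fun xy s => (s + s ^ 2 * Complex.I : ℂ) = xy.1 ∨
      (xy.1 ≠ xy.2 ∧ cross (xy.2 - xy.1) (s + s ^ 2 * Complex.I - xy.1) = 0)) <| by
    rintro ⟨x, y⟩ -
    rw [Set.ofPred_or]
    refine ((Set.finite_singleton x.re).subset fun s hs => ?_).union ?_
    · simpa [← Complex.ofReal_pow] using congrArg Complex.re hs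
    rcases eq_or_ne x y with rfl | hxy
    · simp
    have hyx : (y - x).re ≠ 0 ∨ -(y - x).im ≠ 0 := by
      by_contra! h
      simp only [Complex.sub_re, Complex.sub_im, neg_sub] at h
      exact hxy (Complex.ext (by linarith) (by linarith))
    refine (finite_setOf_quadratic_eq_zero (a := cross (y - x) (-x))
      (Or.inr hyx.symm)).subset fun s hs => ?_
    obtain ⟨-, hs⟩ := hs
    show cross (y - x) (-x) + -(y - x).im * s + (y - x).re * s ^ 2 = 0
    simp only [cross, Complex.sub_re, Complex.sub_im, Complex.add_re, Complex.add_im,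
      Complex.mul_re, Complex.mul_im, Complex.ofReal_re, Complex.ofReal_im, Complex.I_re,
      Complex.I_im, Complex.neg_re, Complex.neg_im, pow_two] at hs ⊢
    linarith
  set w : ℂ := s + s ^ 2 * Complex.I
  have hw : w ∉ Q := fun h => hs (w, w) (mem_product.mpr ⟨h, h⟩) (Or.inl rfl)
  refine ⟨w, hw, fun S hS hcol => ?_⟩
  by_contra! hS₃
  by_cases hwS : w ∈ S
  · obtain ⟨x, hx, y, hy, hxy⟩ := one_lt_card.mp
      (show 1 < (S.erase w).card by rw [card_erase_of_mem hwS]; omega)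
    have hQ' {z} (hz : z ∈ S.erase w) : z ∈ Q :=
      (mem_insert.mp (hS (mem_of_mem_erase hz))).resolve_left (ne_of_mem_erase hz)
    refine hs (x, y) (mem_product.mpr ⟨hQ' hx, hQ' hy⟩) (Or.inr ⟨hxy, ?_⟩)
    refine collinear_iff_cross_eq_zero.mp (hcol.subset ?_)
    rintro z (rfl | rfl | rfl)
    exacts [mem_of_mem_erase hx, mem_of_mem_erase hy, hwS]
  · have := hQ S (fun z hz => (mem_insert.mp (hS hz)).resolve_left (ne_of_mem_of_not_mem hz hwS))
      hcol
    omega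

lemma exists_superset_noMOnLine {Q : Finset ℂ} (hQ : NoMOnLine 3 Q) {n : ℕ}
    (hn : Q.card ≤ n) : ∃ Q', Q ⊆ Q' ∧ Q'.card = n ∧ NoMOnLine 3 Q' := by
  induction n, hn using Nat.le_induction with
  | base => exact ⟨Q, Subset.rfl, rfl, hQ⟩
  | succ n _ ih =>
    obtain ⟨Q', hQQ', rfl, hQ'⟩ := ih
    obtain ⟨w, hw, hw'⟩ := exists_insert_noMOnLine hQ'
    exact ⟨insert w Q', hQQ'.trans (subset_insert _ _), card_insert_of_notMem hw, hw'⟩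

/-- `x + ωy + ω²z = 0` says that `(x, y, z) = (a + b, aω + b, aω² + b)` for some `a, b`:
an equilateral triangle, degenerate when `a = 0`. -/
def equilateralTriples (Q : Finset ℂ) : Finset (ℂ × ℂ × ℂ) :=
  letI := Classical.decEq ℂ
  (Q ×ˢ Q ×ˢ Q).filter fun t => t.1 + omega3 * t.2.1 + omega3 ^ 2 * t.2.2 = 0

@[simp] lemma mem_equilateralTriples {Q : Finset ℂ} {x y z : ℂ} :
    (x, y, z) ∈ equilateralTriples Q ↔
      (x ∈ Q ∧ y ∈ Q ∧ z ∈ Q) ∧ x + omega3 * y + omega3 ^ 2 * z = 0 := by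
  simp [equilateralTriples]

lemma eq_of_add_omega3_mul_add_eq_zero {x y z z' : ℂ}
    (h : x + omega3 * y + omega3 ^ 2 * z = 0) (h' : x + omega3 * y + omega3 ^ 2 * z' = 0) :
    z = z' :=
  mul_left_cancel₀ (pow_ne_zero 2 (omega3_isPrimitiveRoot.ne_zero (by norm_num)))
    (by linear_combination h - h')

lemma isSimilarCopy_triEq {x y z : ℂ} (h : x + omega3 * y + omega3 ^ 2 * z = 0) (hxy : x ≠ y) :
    IsSimilarCopy triEq {x, y, z} := by
  have hω : omega3 - 1 ≠ 0 := sub_ne_zero.mpr (omega3_isPrimitiveRoot.ne_one (by norm_num))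
  set a := (y - x) / (omega3 - 1)
  have ha : a * (omega3 - 1) = y - x := div_mul_cancel₀ _ hω
  refine ⟨a, x - a, div_ne_zero (sub_ne_zero.mpr hxy.symm) hω, ?_⟩
  have hy : a * omega3 + (x - a) = y := by linear_combination ha
  have hz : a * omega3 ^ 2 + (x - a) = z := by
    linear_combination (omega3 + 1) * ha + (omega3 ^ 2 + 1) * h +
      (-x - (omega3 - 1) * y - (omega3 ^ 2 - omega3 + 1) * z) * omega3_sq_add_omega3_add_one
  simp [triEq, Set.image_insert_eq, hy, hz]

lemma card_le_three_of_isSimilarCopy_triEq {S : Finset ℂ} (h : IsSimilarCopy triEq S) :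
    S.card ≤ 3 := by
  classical
  obtain ⟨a, b, -, hS⟩ := h
  rw [← coe_image, coe_inj] at hS
  rw [hS]
  exact card_image_le.trans card_le_three

lemma card_le_SP {P Q : Finset ℂ} {F : Finset (Finset ℂ)}
    (hF : ∀ S ∈ F, S ⊆ Q ∧ IsSimilarCopy P S) : F.card ≤ SP P Q := by
  classical
  unfold SP
  exact card_le_card fun S hS => mem_filter.mpr ⟨mem_powerset.mpr (hF S hS).1, (hF S hS).2⟩

lemma SP_mono {P Q Q' : Finset ℂ} (h : Q ⊆ Q') : SP P Q ≤ SP P Q' := by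
  classical
  unfold SP
  exact card_le_card (filter_subset_filter _ (powerset_mono.mpr h))

lemma SP_le_SPnm {P Q : Finset ℂ} {m : ℕ} (hQ : NoMOnLine m Q) : SP P Q ≤ SPnm P Q.card m := by
  refine le_csSup ⟨2 ^ Q.card, ?_⟩ ⟨Q, rfl, hQ, rfl⟩
  rintro _ ⟨Q', hQ', -, rfl⟩
  classical
  unfold SP
  exact (card_filter_le _ _).trans (by rw [card_powerset, hQ'])

lemma card_filter_equilateralTriples_ne_le (Q : Finset ℂ) :
    ((equilateralTriples Q).filter fun t => t.1 ≠ t.2.1).card ≤ 9 * SP triEq Q := by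
  classical
  set F := (equilateralTriples Q).filter fun t => t.1 ≠ t.2.1
  have hF {t} (ht : t ∈ F) : (t.1 ∈ Q ∧ t.2.1 ∈ Q ∧ t.2.2 ∈ Q) ∧
      (t.1 + omega3 * t.2.1 + omega3 ^ 2 * t.2.2 = 0) ∧ t.1 ≠ t.2.1 := by
    obtain ⟨x, y, z⟩ := t
    simpa [F, and_assoc] using ht
  refine (card_le_mul_card_image (f := fun t => ({t.1, t.2.1, t.2.2} : Finset ℂ)) F 9 ?_).trans
    (Nat.mul_le_mul_left 9 (card_le_SP fun S hS => ?_))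
  · -- a triple is determined by its first two points, both in the triangle
    simp only [mem_image]
    rintro _ ⟨t₀, ht₀, rfl⟩
    have h₀ := card_le_three_of_isSimilarCopy_triEq (isSimilarCopy_triEq (hF ht₀).2.1 (hF ht₀).2.2)
    refine (card_le_card_of_injOn (fun t => (t.1, t.2.1)) (t := _ ×ˢ _) ?_ ?_).trans
      ((card_product _ _).trans_le (Nat.mul_le_mul h₀ h₀))
    · intro t ht
      rw [mem_coe, ← (mem_filter.mp ht).2]
      simp
    · rintro ⟨x, y, z⟩ ht ⟨x', y', z'⟩ ht' htt'
      simp only [Prod.mk.injEq] at htt'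
      obtain ⟨rfl, rfl⟩ := htt'
      have h := (hF (mem_filter.mp ht).1).2.1
      have h' := (hF (mem_filter.mp ht').1).2.1
      rw [eq_of_add_omega3_mul_add_eq_zero (z := z) (z' := z') h h']
  · obtain ⟨t, ht, rfl⟩ := mem_image.mp hS
    refine ⟨fun z hz => ?_, isSimilarCopy_triEq (hF ht).2.1 (hF ht).2.2⟩
    simp only [mem_insert, mem_singleton] at hz
    rcases hz with rfl | rfl | rfl
    exacts [(hF ht).1.1, (hF ht).1.2.1, (hF ht).1.2.2]

lemma card_filter_equilateralTriples_eq_le (Q : Finset ℂ) :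
    ((equilateralTriples Q).filter fun t => t.1 = t.2.1).card ≤ Q.card := by
  classical
  have hdeg {t : ℂ × ℂ × ℂ} (ht : t ∈ (equilateralTriples Q).filter fun t => t.1 = t.2.1) :
      t.1 ∈ Q ∧ t = (t.1, t.1, t.1) := by
    obtain ⟨x, y, z⟩ := t
    simp only [mem_filter, mem_equilateralTriples] at ht
    obtain ⟨⟨⟨hx, -⟩, h⟩, rfl⟩ := ht
    refine ⟨hx, ?_⟩
    rw [eq_of_add_omega3_mul_add_eq_zero h
      (by linear_combination x * omega3_sq_add_omega3_add_one)]
  refine card_le_card_of_injOn Prod.fst (fun t ht => (hdeg ht).1) fun t ht t' ht' htt' => ?_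
  rw [(hdeg ht).2, (hdeg ht').2, htt']

lemma card_equilateralTriples_le (Q : Finset ℂ) :
    (equilateralTriples Q).card ≤ 9 * SP triEq Q + Q.card := by
  classical
  rw [← card_filter_add_card_filter_not (s := equilateralTriples Q) fun t => t.1 ≠ t.2.1]
  refine add_le_add (card_filter_equilateralTriples_ne_le Q) ?_
  simpa only [ne_eq, not_not] using card_filter_equilateralTriples_eq_le Q

lemma card_mul_card_equilateralTriples_le {B Q : Finset ℂ} {ε : ℂ}
    (hinj : Set.InjOn (fun c : ℂ × ℂ => c.1 + ε * c.2) ↑(B ×ˢ Q)) :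
    (equilateralTriples B).card * (equilateralTriples Q).card ≤
      (equilateralTriples ((B ×ˢ Q).image fun c => c.1 + ε * c.2)).card := by
  classical
  rw [← card_product]
  refine card_le_card_of_injOn (fun p => (p.1.1 + ε * p.2.1, p.1.2.1 + ε * p.2.2.1,
    p.1.2.2 + ε * p.2.2.2)) ?_ ?_
  · rintro ⟨⟨b₁, b₂, b₃⟩, ⟨x₁, x₂, x₃⟩⟩ h
    simp only [coe_product, Set.mem_prod, mem_coe, mem_equilateralTriples] at h
    have hmem {b x : ℂ} (hb : b ∈ B) (hx : x ∈ Q) :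
        b + ε * x ∈ (B ×ˢ Q).image fun c => c.1 + ε * c.2 :=
      mem_image_of_mem (fun c : ℂ × ℂ => c.1 + ε * c.2) (a := (b, x)) (mem_product.mpr ⟨hb, hx⟩)
    exact mem_equilateralTriples.mpr ⟨⟨hmem h.1.1.1 h.2.1.1, hmem h.1.1.2.1 h.2.1.2.1,
      hmem h.1.1.2.2 h.2.1.2.2⟩, by linear_combination h.1.2 + ε * h.2.2⟩
  · rintro ⟨⟨b₁, b₂, b₃⟩, ⟨x₁, x₂, x₃⟩⟩ h ⟨⟨b₁', b₂', b₃'⟩, ⟨x₁', x₂', x₃'⟩⟩ h' heq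
    simp only [coe_product, Set.mem_prod, mem_coe, mem_equilateralTriples] at h h'
    simp only [Prod.mk.injEq] at heq
    have hmem {b x : ℂ} (hb : b ∈ B) (hx : x ∈ Q) : (b, x) ∈ (↑(B ×ˢ Q) : Set (ℂ × ℂ)) := by
      simp [hb, hx]
    have e₁ := hinj (hmem h.1.1.1 h.2.1.1) (hmem h'.1.1.1 h'.2.1.1) heq.1
    have e₂ := hinj (hmem h.1.1.2.1 h.2.1.2.1) (hmem h'.1.1.2.1 h'.2.1.2.1) heq.2.1
    have e₃ := hinj (hmem h.1.1.2.2 h.2.1.2.2) (hmem h'.1.1.2.2 h'.2.1.2.2) heq.2.2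
    simp only [Prod.mk.injEq] at e₁ e₂ e₃ ⊢
    tauto

lemma exists_noMOnLine_card_pow {B : Finset ℂ} (hB : NoMOnLine 3 B) (hB₃ : 2 < B.card)
    (k : ℕ) : ∃ Q : Finset ℂ, NoMOnLine 3 Q ∧ Q.card = B.card ^ k ∧
      (equilateralTriples B).card ^ k ≤ (equilateralTriples Q).card := by
  induction k with
  | zero =>
    refine ⟨{0}, fun S hS _ => (card_le_card hS).trans (by simp), rfl, ?_⟩
    exact card_pos.mpr ⟨(0, 0, 0), by simp⟩
  | succ k ih =>
    obtain ⟨Q, hQ, hcard, hT⟩ := ih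
    obtain ⟨ε, hinj, hQ'⟩ := exists_injOn_noMOnLine_image hB hQ hB₃
    refine ⟨_, hQ', by rw [card_image_of_injOn hinj, card_product, hcard, pow_succ'], ?_⟩
    rw [pow_succ']
    exact (Nat.mul_le_mul_left _ hT).trans (card_mul_card_equilateralTriples_le hinj)

def eisenstein (p : ℤ × ℤ) : ℂ := p.1 + p.2 * omega3

lemma eisenstein_sub (p q : ℤ × ℤ) : eisenstein (p - q) = eisenstein p - eisenstein q := by
  simp only [eisenstein, Prod.fst_sub, Prod.snd_sub, Int.cast_sub]; ring

lemma cross_eisenstein (p q : ℤ × ℤ) :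
    cross (eisenstein p) (eisenstein q) = ((p.1 * q.2 - p.2 * q.1 : ℤ) : ℝ) * omega3.im := by
  simp only [cross, eisenstein, Complex.add_re, Complex.add_im, Complex.mul_re, Complex.mul_im,
    Complex.intCast_re, Complex.intCast_im]
  push_cast
  ring

lemma eisenstein_injective : Function.Injective eisenstein := by
  intro p q h
  have him : (p.2 : ℝ) * omega3.im = q.2 * omega3.im := by
    simpa [eisenstein] using congrArg Complex.im h
  have h₂ : (p.2 : ℝ) = q.2 := mul_right_cancel₀ omega3_im_pos.ne' him
  have h₁ : (p.1 : ℝ) = q.1 := by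
    simpa [eisenstein, h₂] using congrArg Complex.re h
  exact Prod.ext (by exact_mod_cast h₁) (by exact_mod_cast h₂)

/-- Points `a + bω` of the Eisenstein lattice, no three collinear, spanning 29 equilateral
triangles; with the 15 degenerate ones this gives `3 · 29 + 15 = 102` equilateral triples. -/
def baseLattice : Finset (ℤ × ℤ) :=
  {(-4, 1), (-1, -5), (5, 4), (2, 2), (-2, 0), (0, -2), (-7, -6), (6, -1), (1, 7), (2, -3),
    (3, 5), (-5, -2), (-1, 3), (-3, -4), (4, 1)}

lemma card_baseLattice : baseLattice.card = 15 := by decide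

lemma baseLattice_no_three_collinear : ∀ p ∈ baseLattice, ∀ q ∈ baseLattice,
    ∀ r ∈ baseLattice, p ≠ q → p ≠ r → q ≠ r →
      (q - p).1 * (r - p).2 - (q - p).2 * (r - p).1 ≠ 0 := by
  decide +kernel

/-- The two conditions are the coordinates of `x + ωy + ω²z` in the basis `1, ω`,
computed with `ω² = -1 - ω`. -/
lemma card_baseLattice_equilateralTriples :
    ((baseLattice ×ˢ baseLattice ×ˢ baseLattice).filter fun t : (ℤ × ℤ) × (ℤ × ℤ) × (ℤ × ℤ) =>
      t.1.1 - t.2.1.2 - t.2.2.1 + t.2.2.2 = 0 ∧ t.1.2 + t.2.1.1 - t.2.1.2 - t.2.2.1 = 0).card =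
      102 := by
  decide +kernel

def baseConfig : Finset ℂ := baseLattice.image eisenstein

lemma card_baseConfig : baseConfig.card = 15 := by
  rw [baseConfig, card_image_of_injective _ eisenstein_injective, card_baseLattice]

lemma noMOnLine_baseConfig : NoMOnLine 3 baseConfig := by
  refine noMOnLine_three_iff.mpr ?_
  simp only [baseConfig, mem_image]
  rintro _ ⟨p, hp, rfl⟩ _ ⟨q, hq, rfl⟩ _ ⟨r, hr, rfl⟩ hpq hpr hqr
  rw [← eisenstein_sub, ← eisenstein_sub, cross_eisenstein]
  refine mul_ne_zero (Int.cast_ne_zero.mpr ?_) omega3_im_pos.ne'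
  exact baseLattice_no_three_collinear p hp q hq r hr (ne_of_apply_ne _ hpq)
    (ne_of_apply_ne _ hpr) (ne_of_apply_ne _ hqr)

lemma card_equilateralTriples_baseConfig : 102 ≤ (equilateralTriples baseConfig).card := by
  rw [← card_baseLattice_equilateralTriples]
  refine card_le_card_of_injOn
    (fun t => (eisenstein t.1, eisenstein t.2.1, eisenstein t.2.2)) ?_ ?_
  · rintro ⟨x, y, z⟩ ht
    simp only [coe_filter, mem_product, Set.mem_ofPred_eq] at ht
    obtain ⟨⟨hx, hy, hz⟩, h₁, h₂⟩ := ht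
    refine mem_equilateralTriples.mpr ⟨⟨mem_image_of_mem _ hx, mem_image_of_mem _ hy,
      mem_image_of_mem _ hz⟩, ?_⟩
    have h₁' : ((x.1 - y.2 - z.1 + z.2 : ℤ) : ℂ) = 0 := by rw [h₁]; simp
    have h₂' : ((x.2 + y.1 - y.2 - z.1 : ℤ) : ℂ) = 0 := by rw [h₂]; simp
    push_cast at h₁' h₂'
    simp only [eisenstein]
    linear_combination h₁' + omega3 * h₂' +
      ((y.2 : ℂ) + z.1 + z.2 * (omega3 - 1)) * omega3_sq_add_omega3_add_one
  · rintro ⟨x, y, z⟩ - ⟨x', y', z'⟩ - h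
    simp only [Prod.mk.injEq] at h ⊢
    exact ⟨eisenstein_injective h.1, eisenstein_injective h.2.1, eisenstein_injective h.2.2⟩

lemma pow_le_SPnm_triEq {k n : ℕ} (hn : 15 ^ (k + 1) ≤ n) :
    102 ^ (k + 1) ≤ 18 * SPnm triEq n 3 := by
  obtain ⟨Q₀, hQ₀, hcard₀, hT₀⟩ := exists_noMOnLine_card_pow noMOnLine_baseConfig
    (by rw [card_baseConfig]; norm_num) (k + 1)
  rw [card_baseConfig] at hcard₀
  obtain ⟨Q, hQ₀Q, rfl, hQ⟩ := exists_superset_noMOnLine hQ₀ (hcard₀ ▸ hn)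
  have hT : 102 ^ (k + 1) ≤ 9 * SP triEq Q₀ + 15 ^ (k + 1) :=
    calc 102 ^ (k + 1) ≤ (equilateralTriples baseConfig).card ^ (k + 1) :=
          Nat.pow_le_pow_left card_equilateralTriples_baseConfig _
      _ ≤ (equilateralTriples Q₀).card := hT₀
      _ ≤ 9 * SP triEq Q₀ + 15 ^ (k + 1) := hcard₀ ▸ card_equilateralTriples_le Q₀
  have hSP : SP triEq Q₀ ≤ SPnm triEq Q.card 3 := (SP_mono hQ₀Q).trans (SP_le_SPnm hQ)
  have h15 : 2 * 15 ^ (k + 1) ≤ 102 ^ (k + 1) :=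
    calc 2 * 15 ^ (k + 1) = 30 * 15 ^ k := by ring
      _ ≤ 102 * 102 ^ k := Nat.mul_le_mul (by norm_num) (Nat.pow_le_pow_left (by norm_num) k)
      _ = 102 ^ (k + 1) := by ring
  omega

lemma rpow_log_div_log_le {a b x : ℝ} {j : ℕ} (ha : 1 < a) (hb : 1 ≤ b) (hx : 0 ≤ x)
    (hxa : x ≤ a ^ j) : x ^ (Real.log b / Real.log a) ≤ b ^ j := by
  have hab : a ^ (Real.log b / Real.log a) = b := by
    rw [Real.rpow_def_of_pos (by linarith), mul_div_cancel₀ _ (Real.log_pos ha).ne',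
      Real.exp_log (by linarith)]
  calc x ^ (Real.log b / Real.log a) ≤ (a ^ j) ^ (Real.log b / Real.log a) :=
        Real.rpow_le_rpow hx hxa (div_nonneg (Real.log_nonneg hb) (Real.log_pos ha).le)
    _ = b ^ j := by
        rw [← Real.rpow_natCast, ← Real.rpow_mul (by linarith), mul_comm, Real.rpow_mul
          (by linarith), hab, Real.rpow_natCast]

/-- For the equilateral triangle `△ = {1, ω, ω²}`,
`S_△(n, 3) ≥ c·n^{log 102 / log 15}` for some `c > 0` and all large `n`. -/
theorem stmt6 :
    ∃ c : ℝ, 0 < c ∧ ∃ N : ℕ, ∀ n : ℕ, N ≤ n →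
      c * (n : ℝ) ^ (Real.log 102 / Real.log 15) ≤ (SPnm triEq n 3 : ℝ) := by
  refine ⟨1 / (18 * 102), by norm_num, 15, fun n hn => ?_⟩
  obtain ⟨k, hk⟩ : ∃ k, Nat.log 15 n = k + 1 :=
    Nat.exists_eq_add_one_of_ne_zero (Nat.log_pos (by norm_num) hn).ne'
  have hlow : 15 ^ (k + 1) ≤ n := hk ▸ Nat.pow_log_le_self 15 (by omega)
  have hhigh : n < 15 ^ (k + 2) := by
    simpa [hk] using Nat.lt_pow_succ_log_self (by norm_num : 1 < 15) n
  have hSP : (102 : ℝ) ^ (k + 1) ≤ 18 * SPnm triEq n 3 := by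
    exact_mod_cast pow_le_SPnm_triEq hlow
  have hn : (n : ℝ) ^ (Real.log 102 / Real.log 15) ≤ 102 ^ (k + 2) :=
    rpow_log_div_log_le (by norm_num) (by norm_num) n.cast_nonneg (by exact_mod_cast hhigh.le)
  rw [pow_succ] at hn
  nlinarith
end
end
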